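/- arXiv:1808.04478 — 3 statements merged into one kernel-verified Lean document; each statement's English description precedes it below -/
import Mathlib

section
/- For all n ≥ 1, the n-step value function of the two-armed bandit cost problem satisfies Vₙ(g,s) = (1/2ⁿ)g² + (1 − 1/2ⁿ)μg + μs + (1/2^{n+2} − 1/4)μ² + (n/2)μ when g < μ/2, and Vₙ(g,s) = g² + μs + n·μ/2 when g ≥ μ/2. -/
/-!
Write `p = 1/2ⁿ` and `Wₚ(g) = p g² + (1-p) μ g + (p/4 - 1/4) μ²` for `g < μ/2`, `Wₚ(g) = g²` otherwise,
so that the claim reads `Vₙ(g,s) = Wₚ(g) + μ s + n μ/2`. Since this is affine in `s` with slope `μ`,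
the four-point average in the Bellman recursion equals `½ Wₚ(g) + ½ Wₚ(g+a) + μ(1-a)/2` plus
`μ s + n μ/2`, and the induction step is the one-variable problem
`W_{p/2}(g) + μ/2 = min_{a ∈ [0,1]} (½ Wₚ(g) + ½ Wₚ(g+a) + μ(1-a)/2)`.
Below `μ/2` the slack is `(p/2)(g+a-μ/2)²` and the minimiser is `a = μ/2 - g`, which lies in `[0,1]`
because `0 ≤ g` and `μ ≤ 2`; from `μ/2` on the slack is `a(2g+a-μ)/2` and the minimiser is `a = 0`.
-/

/-- The value functions of the two-armed bandit cost problem, defined by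
`V₀ = U` and the Bellman recursion `Vₙ₊₁(g,s) = inf_{a ∈ [0,1]} (1/4)(Vₙ(g,s) + Vₙ(g+a,s)
+ Vₙ(g,s+1−a) + Vₙ(g+a,s+1−a))`. -/
noncomputable def banditV (μ : ℝ) : ℕ → ℝ → ℝ → ℝ
  | 0 => fun g s => g^2 + μ*s
  | n+1 => fun g s =>
      sInf ((fun a => (1/4) * (banditV μ n g s + banditV μ n (g+a) s
        + banditV μ n g (s+1-a) + banditV μ n (g+a) (s+1-a))) '' Set.Icc (0:ℝ) 1)

noncomputable def banditProfile (μ p g : ℝ) : ℝ :=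
  if g < μ/2 then p*g^2 + (1-p)*μ*g + (p/4 - 1/4)*μ^2 else g^2

lemma banditProfile_half_add_le (μ p g a : ℝ) (hp : 0 < p) (ha : 0 ≤ a) :
    banditProfile μ (p/2) g + μ/2 ≤
      (1/2)*banditProfile μ p g + (1/2)*banditProfile μ p (g+a) + μ*(1-a)/2 := by
  unfold banditProfile
  split_ifs with hg hga hga
  · nlinarith [mul_nonneg hp.le (sq_nonneg (g+a-μ/2))]
  · nlinarith [sq_nonneg (g+a-μ/2)]
  · linarith
  · nlinarith [mul_nonneg ha (by linarith : (0:ℝ) ≤ 2*g + a - μ)]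

lemma exists_banditProfile_half_add_eq (μ p g : ℝ) (hμ : μ ≤ 2) (hg : 0 ≤ g) :
    ∃ a ∈ Set.Icc (0:ℝ) 1, banditProfile μ (p/2) g + μ/2 =
      (1/2)*banditProfile μ p g + (1/2)*banditProfile μ p (g+a) + μ*(1-a)/2 := by
  by_cases h : g < μ/2
  · refine ⟨μ/2 - g, ⟨by linarith, by linarith⟩, ?_⟩
    rw [add_sub_cancel, banditProfile, banditProfile, banditProfile, if_pos h, if_pos h,
      if_neg (lt_irrefl _)]
    ring
  · refine ⟨0, Set.left_mem_Icc.mpr zero_le_one, ?_⟩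
    simp only [banditProfile, add_zero, if_neg h]
    ring

lemma banditV_eq_banditProfile (μ : ℝ) (hμ : μ ≤ 2) (n : ℕ) (g s : ℝ) (hg : 0 ≤ g) :
    banditV μ n g s = banditProfile μ (1/2^n) g + μ*s + n*μ/2 := by
  induction n generalizing g s with
  | zero =>
    simp only [banditV, banditProfile]
    split_ifs <;> ring
  | succ n ih =>
    set p : ℝ := 1/2^n
    have hp : 0 < p := by positivity
    have hp_succ : (1:ℝ)/2^(n+1) = p/2 := by rw [pow_succ]; ring
    have average_eq : ∀ a ∈ Set.Icc (0:ℝ) 1,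
        (1/4) * (banditV μ n g s + banditV μ n (g+a) s
          + banditV μ n g (s+1-a) + banditV μ n (g+a) (s+1-a))
        = (1/2)*banditProfile μ p g + (1/2)*banditProfile μ p (g+a) + μ*(1-a)/2
          + μ*s + n*μ/2 := by
      rintro a ⟨ha, -⟩
      have hga : 0 ≤ g + a := by linarith
      rw [ih g s hg, ih (g+a) s hga, ih g _ hg, ih (g+a) _ hga]
      ring
    rw [hp_succ, Nat.cast_succ]
    refine IsLeast.csInf_eq ⟨?_, ?_⟩
    · obtain ⟨a, ha, h_eq⟩ := exists_banditProfile_half_add_eq μ p g hμ hg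
      exact ⟨a, ha, (average_eq a ha).trans (by linarith)⟩
    · rintro _ ⟨a, ha, rfl⟩
      refine le_of_le_of_eq ?_ (average_eq a ha).symm
      linarith [banditProfile_half_add_le μ p g a hp ha.1]

theorem stmt_1_general (μ : ℝ) (hμ2 : μ ≤ 2) (n : ℕ)
    (g s : ℝ) (hg : 0 ≤ g) :
    banditV μ n g s =
      if g < μ/2 then
        (1/2^n)*g^2 + (1 - 1/2^n)*μ*g + μ*s + (1/2^(n+2) - 1/4)*μ^2 + ((n:ℝ)/2)*μ
      else g^2 + μ*s + (n:ℝ)*μ/2 := by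
  rw [banditV_eq_banditProfile μ hμ2 n g s hg, banditProfile]
  split_ifs
  · rw [pow_add]; ring
  · ring

theorem stmt_1 (μ : ℝ) (hμ0 : 0 < μ) (hμ2 : μ ≤ 2) (n : ℕ) (hn : 1 ≤ n)
    (g s : ℝ) (hg : 0 ≤ g) (hs : 0 ≤ s) :
    banditV μ n g s =
      if g < μ/2 then
        (1/2^n)*g^2 + (1 - 1/2^n)*μ*g + μ*s + (1/2^(n+2) - 1/4)*μ^2 + ((n:ℝ)/2)*μ
      else g^2 + μ*s + (n:ℝ)*μ/2 :=
  stmt_1_general μ hμ2 n g s hg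
end

section
/- In the two-armed bandit problem, for each n, the minimizer of the map a ↦ tₙ(g,s,a) := (1/4)(Vₙ(g,s) + Vₙ(g+a,s) + Vₙ(g,s+1−a) + Vₙ(g+a,s+1−a)) over a ∈ [0,1] is a* = max(μ/2 − g, 0), where Vₙ has the explicit form Vₙ(g,s) = (1/2ⁿ)g² + (1−1/2ⁿ)μg + μs + (1/2^{n+2} − 1/4)μ² + (n/2)μ for g < μ/2 and Vₙ(g,s) = g² + μs + nμ/2 for g ≥ μ/2. -/
/-!
Writing `c = 1/2^n`, both branches of `Vₙ` have the form
`Vₙ(g,s) = μg - μ²/4 + φ(g - μ/2) + μs + nμ/2`, where `φ = skewSq c` is `c x²` for `x < 0` and `x²`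
for `x ≥ 0`. In `tₙ(g,s,a)` the linear terms in `a` cancel, leaving `tₙ(g,s,a) = K + φ(g + a - μ/2)/2`
with `K` independent of `a`. Since `φ` decreases strictly to `0` and then increases strictly, the
shift `a ≥ 0` minimising `φ(g - μ/2 + a)` is exactly `max(μ/2 - g, 0)`, which lies in `[0,1]`
because `μ ≤ 2` and `g ≥ 0`.
-/

noncomputable def skewSq (c x : ℝ) : ℝ := if x < 0 then c * x ^ 2 else x ^ 2

lemma skewSq_add_max_lt_skewSq_add {c b a : ℝ} (hc : 0 < c) (ha : 0 ≤ a) (hne : a ≠ max (-b) 0) :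
    skewSq c (b + max (-b) 0) < skewSq c (b + a) := by
  rcases le_or_gt 0 b with hb | hb
  · rw [max_eq_right (by linarith)] at hne ⊢
    have hpos : 0 < a := lt_of_le_of_ne ha (Ne.symm hne)
    simp only [skewSq, add_zero, not_lt.2 hb, not_lt.2 (by linarith : 0 ≤ b + a), if_false]
    nlinarith
  · rw [max_eq_left (by linarith)] at hne ⊢
    have hx : b + a ≠ 0 := fun h => hne (by linarith)
    simp only [add_neg_cancel, skewSq, lt_irrefl, if_false, ne_eq, OfNat.ofNat_ne_zero,
      not_false_eq_true, zero_pow]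
    split_ifs <;> positivity

lemma banditValue_eq_skewSq (μ g s : ℝ) (n : ℕ) :
    (if g < μ/2 then
        (1/2^n)*g^2 + (1 - 1/2^n)*μ*g + μ*s + (1/2^(n+2) - 1/4)*μ^2 + ((n:ℝ)/2)*μ
      else g^2 + μ*s + (n:ℝ)*μ/2) =
      μ * g - μ ^ 2 / 4 + skewSq (1/2^n) (g - μ/2) + μ * s + n * μ / 2 := by
  simp only [skewSq, sub_neg]
  split_ifs <;> ring

theorem stmt_2_general (μ g s : ℝ) (hμ2 : μ ≤ 2) (hg : 0 ≤ g) (n : ℕ) :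
    let V : ℝ → ℝ → ℝ := fun g s =>
      if g < μ/2 then
        (1/2^n)*g^2 + (1 - 1/2^n)*μ*g + μ*s + (1/2^(n+2) - 1/4)*μ^2 + ((n:ℝ)/2)*μ
      else g^2 + μ*s + (n:ℝ)*μ/2
    let t : ℝ → ℝ := fun a => (1/4) * (V g s + V (g+a) s + V g (s+1-a) + V (g+a) (s+1-a))
    let astar : ℝ := max (μ/2 - g) 0
    astar ∈ Set.Icc (0:ℝ) 1 ∧ (∀ a ∈ Set.Icc (0:ℝ) 1, t astar ≤ t a) ∧
      (∀ a ∈ Set.Icc (0:ℝ) 1, t a = t astar → a = astar) := by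
  intro V t astar
  have ht : ∀ a, t a = μ * g - μ ^ 2 / 4 + μ * s + μ / 2 + n * μ / 2
      + (skewSq (1/2^n) (g - μ/2) + skewSq (1/2^n) (g - μ/2 + a)) / 2 := by
    intro a
    simp only [t, V, banditValue_eq_skewSq, add_sub_right_comm g a]
    ring
  have hlt : ∀ a, 0 ≤ a → a ≠ astar → t astar < t a := by
    intro a ha hne
    have hφ := skewSq_add_max_lt_skewSq_add (b := g - μ/2) (c := 1/2^n) (by positivity) ha
      (by rwa [neg_sub])
    rw [neg_sub] at hφ
    rw [ht, ht]
    linarith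
  refine ⟨⟨le_max_right _ _, max_le (by linarith) zero_le_one⟩, ?_, ?_⟩
  · intro a ha
    rcases eq_or_ne a astar with rfl | hne
    · rfl
    · exact (hlt a ha.1 hne).le
  · intro a ha heq
    by_contra hne
    exact (hlt a ha.1 hne).ne' heq

theorem stmt_2 (μ g s : ℝ) (hμ0 : 0 < μ) (hμ2 : μ ≤ 2) (hg : 0 ≤ g) (hs : 0 ≤ s) (n : ℕ) :
    let V : ℝ → ℝ → ℝ := fun g s =>
      if g < μ/2 then
        (1/2^n)*g^2 + (1 - 1/2^n)*μ*g + μ*s + (1/2^(n+2) - 1/4)*μ^2 + ((n:ℝ)/2)*μ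
      else g^2 + μ*s + (n:ℝ)*μ/2
    let t : ℝ → ℝ := fun a => (1/4) * (V g s + V (g+a) s + V g (s+1-a) + V (g+a) (s+1-a))
    let astar : ℝ := max (μ/2 - g) 0
    astar ∈ Set.Icc (0:ℝ) 1 ∧ (∀ a ∈ Set.Icc (0:ℝ) 1, t astar ≤ t a) ∧
      (∀ a ∈ Set.Icc (0:ℝ) 1, t a = t astar → a = astar) :=
  stmt_2_general μ g s hμ2 hg n
end

section
/- With ψⁱ₀ := θ₀ and ψⁱₙ(s) := E^π_{θ₀}[1{Sₙ = s}·exp(λⁱ Σ_{k=0}^{n} Ĉ(Sₖ,Aₖ))·Rₙ | Fₙ], the recursion ψⁱₙ = |Y|·Mⁱ(A_{n−1},Yₙ)·ψⁱ_{n−1} holds, where Mⁱ(a,y)[s,s'] := (e^{λⁱ Ĉ(s,a)} P̂(s'|s;a) Q(y|s'))ᵀ and Fₙ = σ((Aₖ, Y_{k+1}), k < n). -/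
/-- The (unnormalized) information state `ψⁱₙ(s) = E[1{Sₙ = s} · exp(λ Σ_k Ĉ(Sₖ,Aₖ)) · Rₙ | Fₙ]`
of the risk-sensitive POMDP, computed under the reference measure as an explicit finite sum
over hidden state paths (conditional on the realized actions `a` and observations `y`);
here `Rₙ = ∏_{k<n} |Y| Q(Y_{k+1}|S_{k+1})`. -/
noncomputable def psiRS {S A Y : Type*} [Fintype S] [Fintype Y] [DecidableEq S]
    (θ : S → ℝ) (Phat : A → S → S → ℝ) (Q : S → Y → ℝ) (Ch : S → A → ℝ) (lam : ℝ)
    (a : ℕ → A) (y : ℕ → Y) (n : ℕ) (s : S) : ℝ :=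
  (Fintype.card Y : ℝ)^n *
    ∑ h ∈ Finset.univ.filter (fun h : Fin (n+1) → S => h (Fin.last n) = s),
      θ (h 0) * ∏ k : Fin n,
        (Real.exp (lam * Ch (h k.castSucc) (a k)) * Phat (a k) (h k.castSucc) (h k.succ) *
          Q (h k.succ) (y k))

/-!
Splitting off the last transition of a hidden path factors the path weight as (weight of the
shorter path) × (one-step weight), so summing over paths ending in `s'` is exactly the
forward recursion of a product of one-step matrices applied to `θ`; `psiRS` is `|Y|ⁿ` times such
a path sum, with one-step matrix `M(aₖ, yₖ)`.
-/

open Finset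

theorem Fin.sum_filter_last_eq_sum_snoc {α M : Type*} [Fintype α] [DecidableEq α]
    [AddCommMonoid M] (n : ℕ) (x : α) (f : (Fin (n + 1) → α) → M) :
    ∑ h ∈ univ.filter (fun h : Fin (n + 1) → α => h (Fin.last n) = x), f h =
      ∑ g : Fin n → α, f (Fin.snoc g x) := by
  rw [sum_filter, ← (Fin.snocEquiv fun _ => α).sum_comp, Fintype.sum_prod_type]
  simp only [Fin.snocEquiv_apply, Fin.snoc_last, sum_ite_irrel, sum_const_zero, sum_ite_eq',
    mem_univ, if_true]
  rfl

section PathSum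

variable {S R : Type*} [Fintype S] [DecidableEq S] [CommSemiring R]

def pathSum (θ : S → R) (w : ℕ → S → S → R) (n : ℕ) (s : S) : R :=
  ∑ h ∈ univ.filter (fun h : Fin (n + 1) → S => h (Fin.last n) = s),
    θ (h 0) * ∏ k : Fin n, w k (h k.castSucc) (h k.succ)

theorem pathSum_zero (θ : S → R) (w : ℕ → S → S → R) (s : S) : pathSum θ w 0 s = θ s := by
  rw [pathSum, Fin.sum_filter_last_eq_sum_snoc, Fintype.sum_unique, Fin.prod_univ_zero, mul_one]
  rfl

theorem pathSum_succ (θ : S → R) (w : ℕ → S → S → R) (n : ℕ) (s' : S) :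
    pathSum θ w (n + 1) s' = ∑ s, w n s s' * pathSum θ w n s := by
  have weight_snoc : ∀ g : Fin (n + 1) → S,
      θ ((Fin.snoc g s' : Fin (n + 2) → S) 0) *
          ∏ k : Fin (n + 1), w k ((Fin.snoc g s' : Fin (n + 2) → S) k.castSucc)
            ((Fin.snoc g s' : Fin (n + 2) → S) k.succ) =
        w n (g (Fin.last n)) s' * (θ (g 0) * ∏ k : Fin n, w k (g k.castSucc) (g k.succ)) := by
    intro g
    rw [Fin.prod_univ_castSucc]
    have h0 : (0 : Fin (n + 2)) = (0 : Fin (n + 1)).castSucc := rfl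
    simp only [h0, Fin.succ_castSucc, Fin.snoc_castSucc, Fin.succ_last, Fin.snoc_last,
      Fin.val_castSucc, Fin.val_last]
    ring
  rw [pathSum, Fin.sum_filter_last_eq_sum_snoc]
  simp only [weight_snoc, pathSum, mul_sum]
  rw [← sum_fiberwise univ (fun g : Fin (n + 1) → S => g (Fin.last n))]
  refine sum_congr rfl fun s _ => sum_congr rfl fun g hg => ?_
  rw [(mem_filter.1 hg).2]

end PathSum

/-- `M(a, y)` before transposition: `riskKernel … a y s s' = M(a, y)[s', s]`. -/
noncomputable def riskKernel {S A Y : Type*} (Phat : A → S → S → ℝ) (Q : S → Y → ℝ)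
    (Ch : S → A → ℝ) (lam : ℝ) (a : A) (y : Y) (s s' : S) : ℝ :=
  Real.exp (lam * Ch s a) * Phat a s s' * Q s' y

theorem psiRS_eq_card_pow_mul_pathSum {S A Y : Type*} [Fintype S] [Fintype Y] [DecidableEq S]
    (θ : S → ℝ) (Phat : A → S → S → ℝ) (Q : S → Y → ℝ) (Ch : S → A → ℝ) (lam : ℝ)
    (a : ℕ → A) (y : ℕ → Y) (n : ℕ) (s : S) :
    psiRS θ Phat Q Ch lam a y n s =
      (Fintype.card Y : ℝ) ^ n * pathSum θ (fun k => riskKernel Phat Q Ch lam (a k) (y k)) n s :=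
  rfl

theorem stmt_17_general {S A Y : Type*} [Fintype S] [Fintype Y] [DecidableEq S]
    (θ : S → ℝ)
    (Phat : A → S → S → ℝ)
    (Q : S → Y → ℝ)
    (Ch : S → A → ℝ) (lam : ℝ) (a : ℕ → A) (y : ℕ → Y) :
    (∀ s, psiRS θ Phat Q Ch lam a y 0 s = θ s) ∧
    ∀ (n : ℕ) (s' : S),
      psiRS θ Phat Q Ch lam a y (n+1) s' =
        (Fintype.card Y : ℝ) *
          ∑ s, (Real.exp (lam * Ch s (a n)) * Phat (a n) s s' * Q s' (y n)) *
            psiRS θ Phat Q Ch lam a y n s := by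
  refine ⟨fun s => ?_, fun n s' => ?_⟩
  · rw [psiRS_eq_card_pow_mul_pathSum, pathSum_zero, pow_zero, one_mul]
  · simp only [psiRS_eq_card_pow_mul_pathSum, pathSum_succ, pow_succ, mul_sum]
    exact sum_congr rfl fun s _ => by rw [riskKernel]; ring

/-- With `ψ₀ = θ₀`, the recursion `ψₙ = |Y| · M(A_{n-1}, Yₙ) ψ_{n-1}` holds, where
`M(a,y)[s,s'] = (e^{λĈ(s,a)} P̂(s'|s;a) Q(y|s'))ᵀ`. -/
theorem stmt_17 {S A Y : Type*} [Fintype S] [Fintype Y] [DecidableEq S]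
    (θ : S → ℝ) (hθ0 : ∀ s, 0 ≤ θ s) (hθ1 : ∑ s, θ s = 1)
    (Phat : A → S → S → ℝ) (hP0 : ∀ a s s', 0 ≤ Phat a s s')
    (hP1 : ∀ a s, ∑ s', Phat a s s' = 1)
    (Q : S → Y → ℝ) (hQ0 : ∀ s y, 0 ≤ Q s y) (hQ1 : ∀ s, ∑ y, Q s y = 1)
    (Ch : S → A → ℝ) (lam : ℝ) (hlam : lam ≠ 0) (a : ℕ → A) (y : ℕ → Y) :
    (∀ s, psiRS θ Phat Q Ch lam a y 0 s = θ s) ∧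
    ∀ (n : ℕ) (s' : S),
      psiRS θ Phat Q Ch lam a y (n+1) s' =
        (Fintype.card Y : ℝ) *
          ∑ s, (Real.exp (lam * Ch s (a n)) * Phat (a n) s s' * Q s' (y n)) *
            psiRS θ Phat Q Ch lam a y n s :=
  stmt_17_general θ Phat Q Ch lam a y
end
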